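/- Let P, Q ∈ B_A(H). Then ω_𝔸([[P,Q],[0,0]]) ≥ (1/2)√( max{‖P+Q‖_A², ‖P−Q‖_A²} − 2ω_A(PQ^{♯_A}) ); in particular the quantity under the square root is nonnegative. -/

import Mathlib

open ContinuousLinearMap

/-- The `A`-seminorm of a vector: `‖x‖_A = √⟨Ax, x⟩`. -/
noncomputable def vnormA {H : Type*} [NormedAddCommGroup H] [InnerProductSpace ℂ H]
    (A : H →L[ℂ] H) (x : H) : ℝ :=
  Real.sqrt (RCLike.re (inner ℂ (A x) x : ℂ))

/-- `T` is `A`-bounded, i.e. `T ∈ B_{A^{1/2}}(H)`. -/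
def ABounded {H : Type*} [NormedAddCommGroup H] [InnerProductSpace ℂ H]
    (A T : H →L[ℂ] H) : Prop :=
  ∃ c : ℝ, 0 < c ∧ ∀ x, vnormA A (T x) ≤ c * vnormA A x

/-- The `A`-operator seminorm `‖T‖_A = sup{‖Tx‖_A : ‖x‖_A = 1}`. -/
noncomputable def opNormA {H : Type*} [NormedAddCommGroup H] [InnerProductSpace ℂ H]
    (A T : H →L[ℂ] H) : ℝ :=
  sSup {c : ℝ | ∃ x : H, vnormA A x = 1 ∧ c = vnormA A (T x)}

/-- The `A`-numerical radius `ω_A(T) = sup{|⟨ATx, x⟩| : ‖x‖_A = 1}`. -/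
noncomputable def wA {H : Type*} [NormedAddCommGroup H] [InnerProductSpace ℂ H]
    (A T : H →L[ℂ] H) : ℝ :=
  sSup {c : ℝ | ∃ x : H, vnormA A x = 1 ∧ c = ‖(inner ℂ (A (T x)) x : ℂ)‖}

/-- `Ts` is the reduced (Douglas) solution of `AX = T*A`, i.e. `Ts = T^{♯_A}`. -/
def IsReducedAdjoint {H : Type*} [NormedAddCommGroup H] [InnerProductSpace ℂ H]
    [CompleteSpace H] (A T Ts : H →L[ℂ] H) : Prop :=
  A ∘L Ts = (ContinuousLinearMap.adjoint T) ∘L A ∧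
    ∀ y, Ts y ∈ closure (Set.range A)

/-- The `2 × 2` operator matrix `[[P, Q], [R, S]]` acting on `H ⊕ H` (with the `ℓ²` product
inner product). -/
noncomputable def blk {H : Type*} [NormedAddCommGroup H] [InnerProductSpace ℂ H]
    (P Q R S : H →L[ℂ] H) : WithLp 2 (H × H) →L[ℂ] WithLp 2 (H × H) :=
  letI e := (WithLp.prodContinuousLinearEquiv 2 ℂ H H)
  (e.symm.toContinuousLinearMap) ∘L
    ((P.comp (fst ℂ H H) + Q.comp (snd ℂ H H)).prod
      (R.comp (fst ℂ H H) + S.comp (snd ℂ H H))) ∘L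
    (e.toContinuousLinearMap)

/-- `𝔸 = diag(A, A)` on `H ⊕ H`. -/
noncomputable def AA {H : Type*} [NormedAddCommGroup H] [InnerProductSpace ℂ H]
    (A : H →L[ℂ] H) : WithLp 2 (H × H) →L[ℂ] WithLp 2 (H × H) :=
  blk A 0 0 A

/-!
Read everything through a factorisation `A = R† R`: then `⟪A x, y⟫ = ⟪R x, R y⟫`, so the
`A`-seminorm obeys Cauchy–Schwarz and the parallelogram law. An operator `T` with an `A`-adjoint
`S` is `A`-bounded (the `A`-selfadjoint `U = S T` satisfies `‖U x‖_A ≤ ‖U‖ ‖x‖_A` by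
log-convexity of `n ↦ ‖Uⁿ x‖_A`), and then `‖T‖_A = ‖S‖_A`.

Let `W = ω_𝔸([[P, Q], [0, 0]])` and `w = ω_A(P Q^♯)`. Testing `W` against `(P^♯ x, Q^♯ x)` and
`(x, 0)` gives `‖P^♯ x‖_A² + ‖Q^♯ x‖_A² ≤ 4 W² ‖x‖_A²`, while `⟪A P^♯ x, Q^♯ x⟫` is, up to
conjugation, `⟪A P Q^♯ x, x⟫`, of modulus at most `w ‖x‖_A²`. Expanding `‖(P^♯ ± Q^♯) x‖_A²`
bounds `‖P ± Q‖_A² = ‖P^♯ ± Q^♯‖_A²` by `4 W² + 2 w`; the parallelogram law for the same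
vectors gives `2 w ≤ max ‖P ± Q‖_A²`.
-/

open scoped InnerProductSpace ComplexConjugate

section Seminorm

variable {E : Type*} [NormedAddCommGroup E] [InnerProductSpace ℂ E] {A : E →L[ℂ] E}

theorem ContinuousLinearMap.IsPositive.exists_inner_eq_inner [CompleteSpace E]
    (hA : A.IsPositive) : ∃ R : E →L[ℂ] E, ∀ x y, ⟪A x, y⟫_ℂ = ⟪R x, R y⟫_ℂ := by
  obtain ⟨R, rfl⟩ := CStarAlgebra.nonneg_iff_eq_star_mul_self.mp ((nonneg_iff_isPositive A).mpr hA)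
  exact ⟨R, fun x y => adjoint_inner_left R y (R x)⟩

theorem vnormA_eq_norm {R : E →L[ℂ] E} (hR : ∀ x y, ⟪A x, y⟫_ℂ = ⟪R x, R y⟫_ℂ) (x : E) :
    vnormA A x = ‖R x‖ := by
  rw [vnormA, hR, inner_self_eq_norm_sq, Real.sqrt_sq (norm_nonneg _)]

theorem vnormA_nonneg (x : E) : 0 ≤ vnormA A x := Real.sqrt_nonneg _

theorem vnormA_sq (hA : A.IsPositive) (x : E) : vnormA A x ^ 2 = RCLike.re ⟪A x, x⟫_ℂ :=
  Real.sq_sqrt (hA.re_inner_nonneg_left x)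

theorem vnormA_le_sqrt_norm_mul (x : E) : vnormA A x ≤ √‖A‖ * ‖x‖ := by
  rw [← Real.sqrt_sq (norm_nonneg x), ← Real.sqrt_mul (norm_nonneg A)]
  refine Real.sqrt_le_sqrt ((RCLike.re_le_norm _).trans ?_)
  calc ‖⟪A x, x⟫_ℂ‖ ≤ ‖A x‖ * ‖x‖ := norm_inner_le_norm _ _
    _ ≤ ‖A‖ * ‖x‖ * ‖x‖ := by gcongr; exact A.le_opNorm x
    _ = ‖A‖ * ‖x‖ ^ 2 := by ring

variable [CompleteSpace E]

theorem inner_self_eq_vnormA_sq (hA : A.IsPositive) (x : E) :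
    ⟪A x, x⟫_ℂ = ((vnormA A x ^ 2 : ℝ) : ℂ) := by
  obtain ⟨R, hR⟩ := hA.exists_inner_eq_inner
  rw [vnormA_eq_norm hR, hR, inner_self_eq_norm_sq_to_K]
  norm_cast

theorem norm_inner_le_vnormA_mul_vnormA (hA : A.IsPositive) (x y : E) :
    ‖⟪A x, y⟫_ℂ‖ ≤ vnormA A x * vnormA A y := by
  obtain ⟨R, hR⟩ := hA.exists_inner_eq_inner
  rw [hR, vnormA_eq_norm hR, vnormA_eq_norm hR]
  exact norm_inner_le_norm _ _

theorem vnormA_add_sq (hA : A.IsPositive) (x y : E) :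
    vnormA A (x + y) ^ 2 = vnormA A x ^ 2 + 2 * RCLike.re ⟪A x, y⟫_ℂ + vnormA A y ^ 2 := by
  obtain ⟨R, hR⟩ := hA.exists_inner_eq_inner
  simp only [vnormA_eq_norm hR, hR, map_add]
  exact norm_add_sq _ _

theorem vnormA_sub_sq (hA : A.IsPositive) (x y : E) :
    vnormA A (x - y) ^ 2 = vnormA A x ^ 2 - 2 * RCLike.re ⟪A x, y⟫_ℂ + vnormA A y ^ 2 := by
  obtain ⟨R, hR⟩ := hA.exists_inner_eq_inner
  simp only [vnormA_eq_norm hR, hR, map_sub]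
  exact norm_sub_sq _ _

theorem vnormA_smul (hA : A.IsPositive) (c : ℂ) (x : E) :
    vnormA A (c • x) = ‖c‖ * vnormA A x := by
  obtain ⟨R, hR⟩ := hA.exists_inner_eq_inner
  simp only [vnormA_eq_norm hR, map_smul, norm_smul]

theorem exists_eq_smul_of_vnormA_ne_zero (hA : A.IsPositive) {x : E} (hx : vnormA A x ≠ 0) :
    ∃ (r : ℝ) (y : E), 0 ≤ r ∧ vnormA A y = 1 ∧ x = (r : ℂ) • y := by
  refine ⟨vnormA A x, (vnormA A x : ℂ)⁻¹ • x, vnormA_nonneg x, ?_, ?_⟩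
  · rw [vnormA_smul hA, norm_inv, Complex.norm_real, Real.norm_of_nonneg (vnormA_nonneg x),
      inv_mul_cancel₀ hx]
  · rw [smul_smul, mul_inv_cancel₀ (by exact_mod_cast hx), one_smul]

end Seminorm

section NumericalRadius

variable {E : Type*} [NormedAddCommGroup E] [InnerProductSpace ℂ E] {A T : E →L[ℂ] E}

theorem wA_nonneg : 0 ≤ wA A T :=
  Real.sSup_nonneg (by rintro c ⟨x, -, rfl⟩; positivity)

theorem opNormA_nonneg : 0 ≤ opNormA A T :=
  Real.sSup_nonneg (by rintro c ⟨x, -, rfl⟩; exact vnormA_nonneg _)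

theorem wA_le_of_forall {β : ℝ} (hβ : 0 ≤ β)
    (h : ∀ x, vnormA A x = 1 → ‖⟪A (T x), x⟫_ℂ‖ ≤ β) : wA A T ≤ β :=
  Real.sSup_le (by rintro c ⟨x, hx, rfl⟩; exact h x hx) hβ

theorem opNormA_le_of_forall {β : ℝ} (hβ : 0 ≤ β)
    (h : ∀ x, vnormA A (T x) ≤ β * vnormA A x) : opNormA A T ≤ β :=
  Real.sSup_le (by rintro c ⟨x, hx, rfl⟩; simpa [hx] using h x) hβ

theorem opNormA_sq_le_of_forall {γ : ℝ} (hγ : 0 ≤ γ)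
    (h : ∀ x, vnormA A (T x) ^ 2 ≤ γ * vnormA A x ^ 2) : opNormA A T ^ 2 ≤ γ := by
  have hle : opNormA A T ≤ √γ := opNormA_le_of_forall (Real.sqrt_nonneg γ) fun x => by
    rw [← Real.sqrt_sq (vnormA_nonneg (T x)), ← Real.sqrt_sq (vnormA_nonneg x),
      ← Real.sqrt_mul hγ]
    exact Real.sqrt_le_sqrt (h x)
  calc opNormA A T ^ 2 ≤ √γ ^ 2 := by gcongr; exact opNormA_nonneg
    _ = γ := Real.sq_sqrt hγ

theorem ABounded.vnormA_apply_eq_zero (hT : ABounded A T) {x : E} (hx : vnormA A x = 0) :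
    vnormA A (T x) = 0 := by
  obtain ⟨c, -, hc⟩ := hT
  exact le_antisymm (by simpa [hx] using hc x) (vnormA_nonneg _)

theorem ABounded.vnormA_le_opNormA (hT : ABounded A T) {x : E} (hx : vnormA A x = 1) :
    vnormA A (T x) ≤ opNormA A T := by
  obtain ⟨c, -, hc⟩ := hT
  refine le_csSup ⟨c, ?_⟩ ⟨x, hx, rfl⟩
  rintro t ⟨y, hy, rfl⟩
  simpa [hy] using hc y

variable [CompleteSpace E]

theorem ABounded.norm_inner_le_wA (hA : A.IsPositive) (hT : ABounded A T) {x : E}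
    (hx : vnormA A x = 1) : ‖⟪A (T x), x⟫_ℂ‖ ≤ wA A T := by
  obtain ⟨c, -, hc⟩ := hT
  refine le_csSup ⟨c, ?_⟩ ⟨x, hx, rfl⟩
  rintro t ⟨y, hy, rfl⟩
  simpa [hy] using (norm_inner_le_vnormA_mul_vnormA hA _ _).trans
    (mul_le_mul_of_nonneg_right (hc y) (vnormA_nonneg y))

theorem ABounded.norm_inner_le_wA_mul (hA : A.IsPositive) (hT : ABounded A T) (x : E) :
    ‖⟪A (T x), x⟫_ℂ‖ ≤ wA A T * vnormA A x ^ 2 := by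
  by_cases hx : vnormA A x = 0
  · simpa [hx, hT.vnormA_apply_eq_zero hx] using norm_inner_le_vnormA_mul_vnormA hA (T x) x
  obtain ⟨r, y, hr, hy, rfl⟩ := exists_eq_smul_of_vnormA_ne_zero hA hx
  have := hT.norm_inner_le_wA hA hy
  simp only [map_smul, inner_smul_left, inner_smul_right, norm_mul, vnormA_smul hA, hy,
    Complex.norm_conj, Complex.norm_real, Real.norm_of_nonneg hr]
  nlinarith [sq_nonneg r]

theorem ABounded.vnormA_apply_le_opNormA_mul (hA : A.IsPositive) (hT : ABounded A T) (x : E) :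
    vnormA A (T x) ≤ opNormA A T * vnormA A x := by
  by_cases hx : vnormA A x = 0
  · simp [hx, hT.vnormA_apply_eq_zero hx]
  obtain ⟨r, y, -, hy, rfl⟩ := exists_eq_smul_of_vnormA_ne_zero hA hx
  rw [map_smul, vnormA_smul hA, vnormA_smul hA, hy, mul_one, mul_comm]
  exact mul_le_mul_of_nonneg_right (hT.vnormA_le_opNormA hy) (norm_nonneg _)

end NumericalRadius

section Polarization

variable {E : Type*} [NormedAddCommGroup E] [InnerProductSpace ℂ E] [CompleteSpace E]
  {A T : E →L[ℂ] E}

theorem ABounded.norm_inner_add_inner_le (hA : A.IsPositive) (hT : ABounded A T) (z v : E) :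
    ‖⟪A (T z), v⟫_ℂ + ⟪A (T v), z⟫_ℂ‖ ≤ wA A T * (vnormA A z ^ 2 + vnormA A v ^ 2) := by
  have hpolar : ⟪A (T (z + v)), z + v⟫_ℂ - ⟪A (T (z - v)), z - v⟫_ℂ
      = 2 * (⟪A (T z), v⟫_ℂ + ⟪A (T v), z⟫_ℂ) := by
    simp only [map_add, map_sub, inner_add_left, inner_add_right, inner_sub_left,
      inner_sub_right]
    ring
  have hparallelogram : vnormA A (z + v) ^ 2 + vnormA A (z - v) ^ 2
      = 2 * (vnormA A z ^ 2 + vnormA A v ^ 2) := by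
    rw [vnormA_add_sq hA, vnormA_sub_sq hA]
    ring
  have h := (norm_sub_le _ _).trans
    (add_le_add (hT.norm_inner_le_wA_mul hA (z + v)) (hT.norm_inner_le_wA_mul hA (z - v)))
  rw [hpolar, norm_mul, ← mul_add, hparallelogram] at h
  norm_num at h
  linarith

theorem ABounded.norm_inner_le_wA_mul_add (hA : A.IsPositive) (hT : ABounded A T) (z v : E) :
    ‖⟪A (T z), v⟫_ℂ‖ ≤ wA A T * (vnormA A z ^ 2 + vnormA A v ^ 2) := by
  set a := ⟪A (T z), v⟫_ℂ
  set b := ⟪A (T v), z⟫_ℂ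
  have hadd := hT.norm_inner_add_inner_le hA z v
  have hsub : ‖a - b‖ ≤ wA A T * (vnormA A z ^ 2 + vnormA A v ^ 2) := by
    have h := hT.norm_inner_add_inner_le hA z (Complex.I • v)
    have hrot : ⟪A (T z), Complex.I • v⟫_ℂ + ⟪A (T (Complex.I • v)), z⟫_ℂ
        = Complex.I * (a - b) := by
      simp only [map_smul, inner_smul_left, inner_smul_right, Complex.conj_I, a, b]
      ring
    rw [hrot, norm_mul, vnormA_smul hA] at h
    simpa using h
  have h2a : ‖(2 : ℂ) * a‖ ≤ ‖a + b‖ + ‖a - b‖ := by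
    rw [show (2 : ℂ) * a = (a + b) + (a - b) by ring]
    exact norm_add_le _ _
  rw [norm_mul] at h2a
  norm_num at h2a
  linarith

theorem ABounded.norm_inner_le_two_wA_mul (hA : A.IsPositive) (hT : ABounded A T) (z v : E) :
    ‖⟪A (T z), v⟫_ℂ‖ ≤ 2 * wA A T * vnormA A z * vnormA A v := by
  by_cases hz : vnormA A z = 0
  · simpa [hz, hT.vnormA_apply_eq_zero hz] using norm_inner_le_vnormA_mul_vnormA hA (T z) v
  by_cases hv : vnormA A v = 0
  · simpa [hv] using norm_inner_le_vnormA_mul_vnormA hA (T z) v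
  obtain ⟨r, z, hr, hz1, rfl⟩ := exists_eq_smul_of_vnormA_ne_zero hA hz
  obtain ⟨s, v, hs, hv1, rfl⟩ := exists_eq_smul_of_vnormA_ne_zero hA hv
  have h := hT.norm_inner_le_wA_mul_add hA z v
  simp only [map_smul, inner_smul_left, inner_smul_right, norm_mul, vnormA_smul hA, hz1, hv1,
    Complex.norm_conj, Complex.norm_real, Real.norm_of_nonneg hr, Real.norm_of_nonneg hs] at h ⊢
  nlinarith [mul_nonneg hr hs]

end Polarization

-- The ratios `a (n + 1) / a n` of a log-convex sequence increase, so a first ratio above `c` would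
-- force growth faster than `c ^ n`.
theorem le_mul_of_sq_le_mul_of_le_mul_pow {a : ℕ → ℝ} {K c : ℝ} (ha : ∀ n, 0 ≤ a n)
    (hc : 0 ≤ c) (hconv : ∀ n, a (n + 1) ^ 2 ≤ a n * a (n + 2))
    (hgrowth : ∀ n, a n ≤ K * c ^ n) : a 1 ≤ c * a 0 := by
  by_contra! hlt
  have ha0 : 0 < a 0 := by
    refine (ha 0).lt_of_ne fun h0 => ?_
    have := hconv 0
    rw [← h0, zero_mul] at this
    rw [← h0, mul_zero] at hlt
    nlinarith
  set q := a 1 / a 0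
  have hcq : c < q := by rwa [lt_div_iff₀ ha0]
  have hq : 0 < q := hc.trans_lt hcq
  have hratio : ∀ n, 0 < a n ∧ q * a n ≤ a (n + 1) := by
    intro n
    induction n with
    | zero => exact ⟨ha0, (div_mul_cancel₀ _ ha0.ne').le⟩
    | succ n ih =>
      obtain ⟨hpos, hle⟩ := ih
      have hpos' : 0 < a (n + 1) := (mul_pos hq hpos).trans_le hle
      refine ⟨hpos', ?_⟩
      have := hconv n
      nlinarith [mul_le_mul_of_nonneg_right hle hpos'.le]
  have hgeom : ∀ n, q ^ n * a 0 ≤ a n := by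
    intro n
    induction n with
    | zero => simp
    | succ n ih => calc
        q ^ (n + 1) * a 0 = q * (q ^ n * a 0) := by ring
        _ ≤ q * a n := by gcongr
        _ ≤ a (n + 1) := (hratio n).2
  have hlim : Filter.Tendsto (fun n : ℕ => K * (c / q) ^ n) Filter.atTop (nhds 0) := by
    simpa using (tendsto_pow_atTop_nhds_zero_of_lt_one (div_nonneg hc hq.le)
      ((div_lt_one hq).mpr hcq)).const_mul K
  have hbound : ∀ n, a 0 ≤ K * (c / q) ^ n := fun n => by
    rw [div_pow, ← mul_div_assoc, le_div_iff₀ (pow_pos hq n), mul_comm]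
    exact (hgeom n).trans (hgrowth n)
  exact ha0.not_ge (ge_of_tendsto' hlim hbound)

section AAdjoint

variable {E : Type*} [NormedAddCommGroup E] [InnerProductSpace ℂ E] {A : E →L[ℂ] E}

-- The relation `A S = T† A` of `IsReducedAdjoint` without its range condition: unlike the reduced
-- solution, it is symmetric and stable under sums and composition.
def IsAAdjoint (A T S : E →L[ℂ] E) : Prop :=
  ∀ u w, ⟪A (S u), w⟫_ℂ = ⟪A u, T w⟫_ℂ

theorem IsReducedAdjoint.isAAdjoint [CompleteSpace E] {T S : E →L[ℂ] E}
    (h : IsReducedAdjoint A T S) : IsAAdjoint A T S := fun u w => by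
  rw [← comp_apply A S, h.1, comp_apply, adjoint_inner_left]

namespace IsAAdjoint

variable {T S T' S' U : E →L[ℂ] E}

theorem symm (hA : A.IsPositive) (h : IsAAdjoint A T S) : IsAAdjoint A S T := fun u w => by
  rw [hA.inner_left_eq_inner_right, ← inner_conj_symm, ← h w u, inner_conj_symm,
    ← hA.inner_left_eq_inner_right]

theorem add (h : IsAAdjoint A T S) (h' : IsAAdjoint A T' S') :
    IsAAdjoint A (T + T') (S + S') := fun u w => by
  simp only [add_apply, map_add, inner_add_left, inner_add_right, h u w, h' u w]

theorem sub (h : IsAAdjoint A T S) (h' : IsAAdjoint A T' S') :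
    IsAAdjoint A (T - T') (S - S') := fun u w => by
  simp only [sub_apply, map_sub, inner_sub_left, inner_sub_right, h u w, h' u w]

theorem comp (h : IsAAdjoint A T S) (h' : IsAAdjoint A T' S') :
    IsAAdjoint A (T ∘L T') (S' ∘L S) := fun u w =>
  (h' (S u) w).trans (h u (T' w))

variable [CompleteSpace E]

theorem vnormA_apply_sq_le (hA : A.IsPositive) (h : IsAAdjoint A S T) (x : E) :
    vnormA A (T x) ^ 2 ≤ vnormA A x * vnormA A (S (T x)) := by
  rw [vnormA_sq hA, h x (T x)]
  exact (RCLike.re_le_norm _).trans (norm_inner_le_vnormA_mul_vnormA hA _ _)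

theorem vnormA_apply_le_of_self (hA : A.IsPositive) (h : IsAAdjoint A U U) (x : E) :
    vnormA A (U x) ≤ ‖U‖ * vnormA A x := by
  have hgrowth : ∀ n, ‖(U ^ n) x‖ ≤ ‖U‖ ^ n * ‖x‖ := by
    intro n
    induction n with
    | zero => simp
    | succ n ih =>
      rw [pow_succ', mul_apply_eq_comp, pow_succ', mul_assoc]
      exact U.le_opNorm_of_le ih
  simpa using le_mul_of_sq_le_mul_of_le_mul_pow (a := fun n => vnormA A ((U ^ n) x))
    (K := √‖A‖ * ‖x‖) (fun n => vnormA_nonneg _) (norm_nonneg U)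
    (fun n => by
      simpa only [pow_succ', mul_apply_eq_comp] using h.vnormA_apply_sq_le hA ((U ^ n) x))
    (fun n => (vnormA_le_sqrt_norm_mul _).trans (by
      rw [mul_assoc, mul_comm ‖x‖]
      exact mul_le_mul_of_nonneg_left (hgrowth n) (Real.sqrt_nonneg _)))

theorem aBounded (hA : A.IsPositive) (h : IsAAdjoint A T S) : ABounded A T := by
  have hU : IsAAdjoint A (S ∘L T) (S ∘L T) := (h.symm hA).comp h
  refine ⟨√‖S ∘L T‖ + 1, by positivity, fun x => ?_⟩
  have hsq : vnormA A (T x) ^ 2 ≤ (√‖S ∘L T‖ * vnormA A x) ^ 2 := by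
    rw [mul_pow, Real.sq_sqrt (norm_nonneg _)]
    calc vnormA A (T x) ^ 2 ≤ vnormA A x * vnormA A ((S ∘L T) x) :=
          (h.symm hA).vnormA_apply_sq_le hA x
      _ ≤ vnormA A x * (‖S ∘L T‖ * vnormA A x) := by
        gcongr
        · exact vnormA_nonneg x
        · exact hU.vnormA_apply_le_of_self hA x
      _ = ‖S ∘L T‖ * vnormA A x ^ 2 := by ring
  calc vnormA A (T x) ≤ √‖S ∘L T‖ * vnormA A x :=
        (pow_le_pow_iff_left₀ (vnormA_nonneg _)
          (mul_nonneg (Real.sqrt_nonneg _) (vnormA_nonneg x)) two_ne_zero).mp hsq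
    _ ≤ (√‖S ∘L T‖ + 1) * vnormA A x := by
        gcongr
        · exact vnormA_nonneg x
        · exact le_add_of_nonneg_right zero_le_one

theorem vnormA_apply_le_of_forall (hA : A.IsPositive) (h : IsAAdjoint A T S)
    {N : ℝ} (hN : 0 ≤ N) (hT : ∀ y, vnormA A (T y) ≤ N * vnormA A y) (x : E) :
    vnormA A (S x) ≤ N * vnormA A x := by
  have hsq : vnormA A (S x) * vnormA A (S x) ≤ N * vnormA A x * vnormA A (S x) := by
    have := h.vnormA_apply_sq_le hA x
    have := mul_le_mul_of_nonneg_left (hT (S x)) (vnormA_nonneg (A := A) x)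
    nlinarith
  rcases (vnormA_nonneg (S x)).eq_or_lt with h0 | hpos
  · rw [← h0]
    exact mul_nonneg hN (vnormA_nonneg x)
  · exact le_of_mul_le_mul_right hsq hpos

theorem opNormA_le (hA : A.IsPositive) (h : IsAAdjoint A T S) :
    opNormA A S ≤ opNormA A T :=
  opNormA_le_of_forall opNormA_nonneg <| h.vnormA_apply_le_of_forall hA opNormA_nonneg
    ((h.aBounded hA).vnormA_apply_le_opNormA_mul hA)

theorem opNormA_eq (hA : A.IsPositive) (h : IsAAdjoint A T S) :
    opNormA A S = opNormA A T :=
  le_antisymm (h.opNormA_le hA) ((h.symm hA).opNormA_le hA)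

end IsAAdjoint

end AAdjoint

section Block

variable {H : Type*} [NormedAddCommGroup H] [InnerProductSpace ℂ H] {A : H →L[ℂ] H}

theorem blk_apply_fst (P Q R S : H →L[ℂ] H) (z : WithLp 2 (H × H)) :
    (blk P Q R S z).fst = P z.fst + Q z.snd := rfl

theorem blk_apply_snd (P Q R S : H →L[ℂ] H) (z : WithLp 2 (H × H)) :
    (blk P Q R S z).snd = R z.fst + S z.snd := rfl

theorem inner_AA_apply (z w : WithLp 2 (H × H)) :
    ⟪AA A z, w⟫_ℂ = ⟪A z.fst, w.fst⟫_ℂ + ⟪A z.snd, w.snd⟫_ℂ := by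
  simp [AA, WithLp.prod_inner_apply, blk_apply_fst, blk_apply_snd]

theorem isPositive_AA (hA : A.IsPositive) : (AA A).IsPositive := by
  refine ⟨fun z w => ?_, fun z => ?_⟩
  · change ⟪AA A z, w⟫_ℂ = ⟪z, AA A w⟫_ℂ
    rw [inner_AA_apply, WithLp.prod_inner_apply, hA.inner_left_eq_inner_right,
      hA.inner_left_eq_inner_right]
    simp [AA, blk_apply_fst, blk_apply_snd]
  · rw [reApplyInnerSelf_apply, inner_AA_apply, map_add]
    exact add_nonneg (hA.re_inner_nonneg_left _) (hA.re_inner_nonneg_left _)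

theorem vnormA_AA_sq (hA : A.IsPositive) (z : WithLp 2 (H × H)) :
    vnormA (AA A) z ^ 2 = vnormA A z.fst ^ 2 + vnormA A z.snd ^ 2 := by
  rw [vnormA_sq (isPositive_AA hA), vnormA_sq hA, vnormA_sq hA, inner_AA_apply, map_add]

theorem isAAdjoint_blk {P Q Ps Qs : H →L[ℂ] H} (hP : IsAAdjoint A P Ps)
    (hQ : IsAAdjoint A Q Qs) : IsAAdjoint (AA A) (blk P Q 0 0) (blk Ps 0 Qs 0) := by
  intro u w
  rw [inner_AA_apply, inner_AA_apply]
  simp only [blk_apply_fst, blk_apply_snd, zero_apply, add_zero,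
    inner_zero_right, inner_add_right, hP u.fst w.fst, hQ u.fst w.snd]

theorem vnormA_sq_add_vnormA_sq_le [CompleteSpace H] (hA : A.IsPositive)
    {P Q Ps Qs : H →L[ℂ] H} (hP : IsAAdjoint A P Ps) (hQ : IsAAdjoint A Q Qs) (x : H) :
    vnormA A (Ps x) ^ 2 + vnormA A (Qs x) ^ 2
      ≤ (2 * wA (AA A) (blk P Q 0 0) * vnormA A x) ^ 2 := by
  set u : WithLp 2 (H × H) := WithLp.toLp 2 (Ps x, Qs x)
  set e : WithLp 2 (H × H) := WithLp.toLp 2 (x, 0)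
  have hu : vnormA (AA A) u ^ 2 = vnormA A (Ps x) ^ 2 + vnormA A (Qs x) ^ 2 :=
    vnormA_AA_sq hA u
  have he : vnormA (AA A) e = vnormA A x := by
    rw [vnormA, vnormA, inner_AA_apply]
    simp [e]
  have hinner : ⟪AA A (blk P Q 0 0 u), e⟫_ℂ = ((vnormA (AA A) u ^ 2 : ℝ) : ℂ) := by
    simp only [inner_AA_apply, blk_apply_fst, blk_apply_snd, u, e, zero_apply, add_zero,
      map_zero, inner_zero_left, map_add, inner_add_left, WithLp.toLp_fst, WithLp.toLp_snd]
    rw [(hP.symm hA) (Ps x) x, (hQ.symm hA) (Qs x) x, inner_self_eq_vnormA_sq hA,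
      inner_self_eq_vnormA_sq hA, hu]
    push_cast
    ring
  have hAA := isPositive_AA hA
  have hbound := ((isAAdjoint_blk hP hQ).aBounded hAA).norm_inner_le_two_wA_mul hAA u e
  rw [hinner, he, Complex.norm_real, Real.norm_of_nonneg (sq_nonneg _)] at hbound
  have hle : vnormA (AA A) u ≤ 2 * wA (AA A) (blk P Q 0 0) * vnormA A x := by
    rcases (vnormA_nonneg (A := AA A) u).eq_or_lt with h0 | hpos
    · rw [← h0]
      exact mul_nonneg (mul_nonneg zero_le_two wA_nonneg) (vnormA_nonneg x)
    · nlinarith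
  rw [← hu]
  exact pow_le_pow_left₀ (vnormA_nonneg u) hle 2

end Block

section Estimates

variable {H : Type*} [NormedAddCommGroup H] [InnerProductSpace ℂ H] [CompleteSpace H]
  {A P Q Ps Qs : H →L[ℂ] H}

theorem two_wA_comp_le_max_opNormA_sq (hA : A.IsPositive) (hP : IsAAdjoint A P Ps)
    (hQ : IsAAdjoint A Q Qs) :
    2 * wA A (P ∘L Qs) ≤ max (opNormA A (P + Q) ^ 2) (opNormA A (P - Q) ^ 2) := by
  set M := max (opNormA A (P + Q) ^ 2) (opNormA A (P - Q) ^ 2)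
  have hM : 0 ≤ M := (sq_nonneg _).trans (le_max_left _ _)
  suffices wA A (P ∘L Qs) ≤ M / 2 by linarith
  refine wA_le_of_forall (by positivity) fun x hx => ?_
  have hplus : vnormA A ((Ps + Qs) x) ^ 2 ≤ M := by
    refine le_trans ?_ (le_max_left _ _)
    rw [← (hP.add hQ).opNormA_eq hA]
    exact pow_le_pow_left₀ (vnormA_nonneg _)
      ((((hP.add hQ).symm hA).aBounded hA).vnormA_le_opNormA hx) 2
  have hminus : vnormA A ((Ps - Qs) x) ^ 2 ≤ M := by
    refine le_trans ?_ (le_max_right _ _)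
    rw [← (hP.sub hQ).opNormA_eq hA]
    exact pow_le_pow_left₀ (vnormA_nonneg _)
      ((((hP.sub hQ).symm hA).aBounded hA).vnormA_le_opNormA hx) 2
  rw [add_apply, vnormA_add_sq hA] at hplus
  rw [sub_apply, vnormA_sub_sq hA] at hminus
  calc ‖⟪A ((P ∘L Qs) x), x⟫_ℂ‖ = ‖⟪A (Qs x), Ps x⟫_ℂ‖ := by
        rw [comp_apply, (hP.symm hA) (Qs x) x]
    _ ≤ vnormA A (Qs x) * vnormA A (Ps x) := norm_inner_le_vnormA_mul_vnormA hA _ _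
    _ ≤ M / 2 := by nlinarith [sq_nonneg (vnormA A (Qs x) - vnormA A (Ps x))]

theorem max_opNormA_sq_le (hA : A.IsPositive) (hP : IsAAdjoint A P Ps) (hQ : IsAAdjoint A Q Qs) :
    max (opNormA A (P + Q) ^ 2) (opNormA A (P - Q) ^ 2)
      ≤ (2 * wA (AA A) (blk P Q 0 0)) ^ 2 + 2 * wA A (P ∘L Qs) := by
  set W := wA (AA A) (blk P Q 0 0)
  set w := wA A (P ∘L Qs)
  have hγ : 0 ≤ (2 * W) ^ 2 + 2 * w := add_nonneg (sq_nonneg _) (mul_nonneg zero_le_two wA_nonneg)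
  have hcross : ∀ x, |RCLike.re ⟪A (Ps x), Qs x⟫_ℂ| ≤ w * vnormA A x ^ 2 := fun x =>
    calc |RCLike.re ⟪A (Ps x), Qs x⟫_ℂ| ≤ ‖⟪A (Ps x), Qs x⟫_ℂ‖ := RCLike.abs_re_le_norm _
      _ = ‖⟪A ((P ∘L Qs) x), x⟫_ℂ‖ := by
        rw [comp_apply, (hP.symm hA) (Qs x) x, hA.inner_left_eq_inner_right,
          ← inner_conj_symm, RCLike.norm_conj]
      _ ≤ w * vnormA A x ^ 2 := ((hP.comp (hQ.symm hA)).aBounded hA).norm_inner_le_wA_mul hA x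
  have hsum x := vnormA_sq_add_vnormA_sq_le hA hP hQ x
  refine max_le ?_ ?_
  · rw [← (hP.add hQ).opNormA_eq hA]
    refine opNormA_sq_le_of_forall hγ fun x => ?_
    rw [add_apply, vnormA_add_sq hA]
    nlinarith [hsum x, hcross x, le_abs_self (RCLike.re ⟪A (Ps x), Qs x⟫_ℂ)]
  · rw [← (hP.sub hQ).opNormA_eq hA]
    refine opNormA_sq_le_of_forall hγ fun x => ?_
    rw [sub_apply, vnormA_sub_sq hA]
    nlinarith [hsum x, hcross x, neg_abs_le (RCLike.re ⟪A (Ps x), Qs x⟫_ℂ)]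

end Estimates

theorem stmt12 {H : Type*} [NormedAddCommGroup H] [InnerProductSpace ℂ H] [CompleteSpace H]
    (A : H →L[ℂ] H) (hA : A.IsPositive)
    (P Q Qs : H →L[ℂ] H) (hP : ∃ Ps, IsReducedAdjoint A P Ps)
    (hQ : IsReducedAdjoint A Q Qs) :
    0 ≤ max ((opNormA A (P + Q)) ^ 2) ((opNormA A (P - Q)) ^ 2) -
        2 * wA A (P ∘L Qs) ∧
      (1 / 2) * Real.sqrt (max ((opNormA A (P + Q)) ^ 2) ((opNormA A (P - Q)) ^ 2) -
        2 * wA A (P ∘L Qs)) ≤ wA (AA A) (blk P Q 0 0) := by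
  obtain ⟨Ps, hPs⟩ := hP
  have hlower := two_wA_comp_le_max_opNormA_sq hA hPs.isAAdjoint hQ.isAAdjoint
  have hupper := max_opNormA_sq_le hA hPs.isAAdjoint hQ.isAAdjoint
  refine ⟨sub_nonneg.mpr hlower, ?_⟩
  have hW : 0 ≤ wA (AA A) (blk P Q 0 0) := wA_nonneg
  calc (1 / 2) * √(max (opNormA A (P + Q) ^ 2) (opNormA A (P - Q) ^ 2) - 2 * wA A (P ∘L Qs))
      ≤ (1 / 2) * √((2 * wA (AA A) (blk P Q 0 0)) ^ 2) := by gcongr; linarith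
    _ = wA (AA A) (blk P Q 0 0) := by rw [Real.sqrt_sq (by positivity)]; ring
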